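/- Let (K, v, ac_K) and (L, w, ac_L) be valued fields with angular component maps. Let φ : K → L be an embedding of valued fields preserving the angular component (ac_L ∘ φ = φ_r ∘ ac_K for the induced residue field embedding φ_r), and let ψ : K → L be an embedding of valued fields such that w(φ(a) − ψ(a)) > w(φ(b)) for all a ∈ K and all b ∈ K^×. Then ac_L(φ(b)) = ac_L(ψ(b)) for every b ∈ K, and hence ψ also preserves the angular component. -/

import Mathlib

/-!
STATEMENT 6.  Multiplicative valuations: the additive hypothesis
`w(φ(a) − ψ(a)) > w(φ(b))` for all `b ∈ K^×` becomes `w (φ a - ψ a) < w (φ b)`.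
Angular components are as in the paper, valued in the residue field
`IsLocalRing.ResidueField (valuationSubring)`; "`φ` preserves the angular component"
is expressed via the induced residue-field embedding `φr`.
-/

noncomputable def resOf {L Γ₀ : Type*} [Field L] [LinearOrderedCommGroupWithZero Γ₀]
    (w : Valuation L Γ₀) (x : L) : IsLocalRing.ResidueField w.valuationSubring :=
  if h : w x ≤ 1 then IsLocalRing.residue _ (⟨x, h⟩ : w.valuationSubring) else 0

structure AngComp {L Γ₀ : Type*} [Field L] [LinearOrderedCommGroupWithZero Γ₀]
    (w : Valuation L Γ₀) where
  toFun : L → IsLocalRing.ResidueField w.valuationSubring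
  zero_iff : ∀ x, toFun x = 0 ↔ x = 0
  map_mul : ∀ x y, toFun (x * y) = toFun x * toFun y
  res_eq : ∀ x, w x = 1 → toFun x = resOf w x

/-! If `ψ b = φ b * u` with `u` a one-unit, then `ac (ψ b) = ac (φ b) * ac u = ac (φ b)`, because
`ac` agrees with the residue map on units and a one-unit has residue `1`. The closeness hypothesis
applied with `a = b` says exactly that `ψ b / φ b` is a one-unit. -/

namespace AngComp

variable {L Γ₀ : Type*} [Field L] [LinearOrderedCommGroupWithZero Γ₀] {w : Valuation L Γ₀}

theorem resOf_eq_one_of_lt {u : L} (h : w (u - 1) < 1) : resOf w u = 1 := by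
  have hu : w u ≤ 1 := by simpa using (w.map_one_add_of_lt h).le
  rw [resOf, dif_pos hu, ← sub_eq_zero, ← map_one (IsLocalRing.residue w.valuationSubring),
    ← map_sub, IsLocalRing.residue_eq_zero_iff, ValuationSubring.valuation_lt_one_iff]
  exact (w.isEquiv_valuation_valuationSubring).lt_one_iff_lt_one.mp h

theorem apply_eq_one_of_lt (ac : AngComp w) {u : L} (h : w (u - 1) < 1) : ac.toFun u = 1 := by
  have hu : w u = 1 := by simpa using w.map_one_add_of_lt h
  rw [ac.res_eq u hu, resOf_eq_one_of_lt h]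

theorem apply_eq_of_lt (ac : AngComp w) {x y : L} (h : w (y - x) < w x) :
    ac.toFun y = ac.toFun x := by
  have hx : x ≠ 0 := by
    rintro rfl
    simp at h
  have hunit : w (y / x - 1) < 1 := by
    rwa [div_sub_one hx, map_div₀, div_lt_one₀ (w.pos_iff.mpr hx)]
  rw [← mul_div_cancel₀ y hx, ac.map_mul, ac.apply_eq_one_of_lt hunit, mul_one]

end AngComp

theorem statement6_general {K L Γ₀ Δ₀ : Type*} [Field K] [Field L]
    [LinearOrderedCommGroupWithZero Γ₀] [LinearOrderedCommGroupWithZero Δ₀]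
    (v : Valuation K Γ₀) (w : Valuation L Δ₀)
    (acK : AngComp v) (acL : AngComp w)
    (φ ψ : K →+* L)
    (φr : IsLocalRing.ResidueField v.valuationSubring →+*
      IsLocalRing.ResidueField w.valuationSubring)
    (hφac : ∀ x : K, acL.toFun (φ x) = φr (acK.toFun x))
    (hclose : ∀ a b : K, b ≠ 0 → w (φ a - ψ a) < w (φ b)) :
    (∀ b : K, acL.toFun (φ b) = acL.toFun (ψ b)) ∧
      ∀ x : K, acL.toFun (ψ x) = φr (acK.toFun x) := by
  have hac : ∀ b : K, acL.toFun (φ b) = acL.toFun (ψ b) := by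
    intro b
    rcases eq_or_ne b 0 with rfl | hb
    · simp only [map_zero]
    · refine (acL.apply_eq_of_lt ?_).symm
      rw [w.map_sub_swap]
      exact hclose b b hb
  exact ⟨hac, fun x => by rw [← hac x, hφac]⟩

theorem statement6 {K L Γ₀ Δ₀ : Type*} [Field K] [Field L]
    [LinearOrderedCommGroupWithZero Γ₀] [LinearOrderedCommGroupWithZero Δ₀]
    (v : Valuation K Γ₀) (w : Valuation L Δ₀)
    (acK : AngComp v) (acL : AngComp w)
    (φ ψ : K →+* L)
    (hφval : ∀ x y : K, v x ≤ v y ↔ w (φ x) ≤ w (φ y))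
    (hψval : ∀ x y : K, v x ≤ v y ↔ w (ψ x) ≤ w (ψ y))
    (φr : IsLocalRing.ResidueField v.valuationSubring →+*
      IsLocalRing.ResidueField w.valuationSubring)
    (hφac : ∀ x : K, acL.toFun (φ x) = φr (acK.toFun x))
    (hclose : ∀ a b : K, b ≠ 0 → w (φ a - ψ a) < w (φ b)) :
    (∀ b : K, acL.toFun (φ b) = acL.toFun (ψ b)) ∧
      ∀ x : K, acL.toFun (ψ x) = φr (acK.toFun x) :=
  statement6_general v w acK acL φ ψ φr hφac hclose
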